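/- arXiv:2404.00793 — 2 statements merged into one kernel-verified Lean document; each statement's English description precedes it below -/
import Mathlib

section
/- Let W be a nonnegative random variable with E[W] < ∞ and let N be mixed Poisson with random mean W, i.e., P(N = k) = E[e^{−W} W^k / k!]. If P(W ≥ t) = L(t)·t^{−(τ−1)} for a slowly varying function L and τ > 2, then P(N ≥ k) / P(W ≥ k) → 1 as k → ∞; in particular N has a power-law tail with the same exponent as W. -/
open MeasureTheory Filter Finset Nat
open scoped ENNReal NNReal

namespace MixedPoissonAux

lemma real_exp_tsum (w : ℝ) : Real.exp w = ∑' n : ℕ, w ^ n / n ! := by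
  rw [Real.exp_eq_exp_ℝ, NormedSpace.exp_eq_tsum_div]

lemma summable_shift (k : ℕ) (w : ℝ) :
    Summable (fun j : ℕ => w ^ (j + k) / ((j + k)! : ℝ)) :=
  (summable_nat_add_iff k).2 (Real.summable_pow_div_factorial w)

lemma tsum_shift_eq (k : ℕ) (w : ℝ) :
    (∑' j : ℕ, w ^ (j + k) / ((j + k)! : ℝ))
      = Real.exp w - ∑ j ∈ Finset.range k, w ^ j / (j ! : ℝ) := by
  have h := Summable.sum_add_tsum_nat_add (f := fun n : ℕ => w ^ n / (n ! : ℝ)) k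
    (Real.summable_pow_div_factorial w)
  rw [real_exp_tsum]
  linarith

lemma sum_range_le_exp {x : ℝ} (hx : 0 ≤ x) (k : ℕ) :
    ∑ j ∈ Finset.range k, x ^ j / (j ! : ℝ) ≤ Real.exp x := by
  rw [real_exp_tsum]
  exact Summable.sum_le_tsum _ (fun i _ => by positivity) (Real.summable_pow_div_factorial x)

lemma tsum_shift_le_exp {x : ℝ} (hx : 0 ≤ x) (k : ℕ) :
    (∑' j : ℕ, x ^ (j + k) / ((j + k)! : ℝ)) ≤ Real.exp x := by
  rw [tsum_shift_eq]
  have h : 0 ≤ ∑ j ∈ Finset.range k, x ^ j / (j ! : ℝ) := by positivity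
  linarith

noncomputable def pf (k : ℕ) (w : ℝ) : ℝ :=
  Real.exp (-w) * ∑ j ∈ Finset.range k, w ^ j / (j ! : ℝ)

lemma pf_nonneg (k : ℕ) {w : ℝ} (hw : 0 ≤ w) : 0 ≤ pf k w := by
  unfold pf; positivity

lemma pf_le_one (k : ℕ) {w : ℝ} (hw : 0 ≤ w) : pf k w ≤ 1 := by
  unfold pf
  rw [Real.exp_neg, inv_mul_le_one₀ (Real.exp_pos w)]
  exact sum_range_le_exp hw k

lemma summable_aux (k : ℕ) (w : ℝ) :
    Summable (fun j : ℕ => Real.exp (-w) * w ^ (k + j) / ((k + j)! : ℝ)) := by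
  refine ((summable_shift k w).mul_left (Real.exp (-w))).congr fun j => ?_
  rw [add_comm j k]; ring

lemma t_eq (k : ℕ) (w : ℝ) :
    (∑' j : ℕ, Real.exp (-w) * w ^ (k + j) / ((k + j)! : ℝ)) = 1 - pf k w := by
  have h1 : (∑' j : ℕ, Real.exp (-w) * w ^ (k + j) / ((k + j)! : ℝ))
      = Real.exp (-w) * ∑' j : ℕ, w ^ (j + k) / ((j + k)! : ℝ) := by
    rw [← tsum_mul_left]
    exact tsum_congr fun j => by rw [add_comm j k]; ring
  rw [h1, tsum_shift_eq, pf, mul_sub, ← Real.exp_add, neg_add_cancel, Real.exp_zero]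



lemma pf_le_pow {ε : ℝ} (hε : 0 < ε) (k : ℕ) {w : ℝ} (hw : (1 + ε) * k ≤ w) :
    pf k w ≤ ((1 + ε) * Real.exp (-ε)) ^ k := by
  have h1ε : (0:ℝ) < 1 + ε := by linarith
  have hw0 : 0 ≤ w := le_trans (by positivity) hw
  set θ : ℝ := (1 + ε)⁻¹ with hθdef
  have hθ0 : 0 < θ := by positivity
  have hsum : ∑ j ∈ Finset.range k, w ^ j / (j ! : ℝ)
      ≤ (1 + ε) ^ k * Real.exp (θ * w) := by
    calc ∑ j ∈ Finset.range k, w ^ j / (j ! : ℝ)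
        ≤ ∑ j ∈ Finset.range k, (1 + ε) ^ k * ((θ * w) ^ j / (j ! : ℝ)) := by
          refine Finset.sum_le_sum fun j hj => ?_
          have hj' : j ≤ k := le_of_lt (Finset.mem_range.1 hj)
          have hwj : w ^ j = (1 + ε) ^ j * (θ * w) ^ j := by
            rw [mul_pow, ← mul_assoc, ← mul_pow, mul_inv_cancel₀ (ne_of_gt h1ε),
              one_pow, one_mul]
          have h2 : (1 + ε) ^ j ≤ (1 + ε) ^ k := by
            apply pow_le_pow_right₀ (by linarith) hj'
          have h3 : (0:ℝ) ≤ (θ * w) ^ j / (j ! : ℝ) := by positivity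
          calc w ^ j / (j ! : ℝ) = (1 + ε) ^ j * ((θ * w) ^ j / (j ! : ℝ)) := by
                rw [hwj]; ring
            _ ≤ (1 + ε) ^ k * ((θ * w) ^ j / (j ! : ℝ)) :=
                mul_le_mul_of_nonneg_right h2 h3
      _ = (1 + ε) ^ k * ∑ j ∈ Finset.range k, (θ * w) ^ j / (j ! : ℝ) := by
          rw [← Finset.mul_sum]
      _ ≤ (1 + ε) ^ k * Real.exp (θ * w) :=
          mul_le_mul_of_nonneg_left (sum_range_le_exp (by positivity) k) (by positivity)
  have hpf : pf k w ≤ (1 + ε) ^ k * Real.exp (θ * w - w) := by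
    unfold pf
    calc Real.exp (-w) * ∑ j ∈ Finset.range k, w ^ j / (j ! : ℝ)
        ≤ Real.exp (-w) * ((1 + ε) ^ k * Real.exp (θ * w)) :=
          mul_le_mul_of_nonneg_left hsum (le_of_lt (Real.exp_pos _))
      _ = (1 + ε) ^ k * Real.exp (θ * w - w) := by
          rw [Real.exp_sub, Real.exp_neg, div_eq_mul_inv]; ring
  have hθw : θ * ((1 + ε) * k) = k := by rw [hθdef]; field_simp
  have h6 : 1 - θ = ε * θ := by rw [hθdef]; field_simp; ring
  have h5 : ε * k ≤ (1 - θ) * w := by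
    have h7 : ε * θ * ((1 + ε) * k) ≤ ε * θ * w :=
      mul_le_mul_of_nonneg_left hw (by positivity)
    have h8 : ε * θ * ((1 + ε) * k) = ε * k := by
      rw [mul_assoc, hθw]
    rw [h6]; linarith
  have hexp : Real.exp (θ * w - w) ≤ Real.exp (-(ε * k)) := by
    apply Real.exp_le_exp.2
    have h9 : (1 - θ) * w = w - θ * w := by ring
    rw [h9] at h5; linarith
  calc pf k w ≤ (1 + ε) ^ k * Real.exp (-(ε * k)) :=
        le_trans hpf (mul_le_mul_of_nonneg_left hexp (by positivity))
    _ = ((1 + ε) * Real.exp (-ε)) ^ k := by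
        rw [show -(ε * (k:ℝ)) = (k:ℝ) * (-ε) by ring, Real.exp_nat_mul, mul_pow]

lemma tail_le_pow {ε : ℝ} (hε : 0 < ε) (hε1 : ε < 1) (k : ℕ) {w : ℝ} (hw0 : 0 ≤ w)
    (hw : w ≤ (1 - ε) * k) :
    1 - pf k w ≤ ((1 - ε) * Real.exp ε) ^ k := by
  have h1ε : (0:ℝ) < 1 - ε := by linarith
  set θ : ℝ := (1 - ε)⁻¹ with hθdef
  have hθ0 : 0 < θ := by positivity
  have hθ1 : 1 ≤ θ := by
    rw [hθdef, le_inv_comm₀ one_pos h1ε]; linarith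
  have key : 1 - pf k w = Real.exp (-w) * ∑' j : ℕ, w ^ (j + k) / ((j + k)! : ℝ) := by
    rw [tsum_shift_eq, pf, mul_sub, ← Real.exp_add, neg_add_cancel, Real.exp_zero]
  rw [key]
  have hterm : ∀ j : ℕ, w ^ (j + k) / ((j + k)! : ℝ)
      ≤ (1 - ε) ^ k * ((θ * w) ^ (j + k) / ((j + k)! : ℝ)) := by
    intro j
    have hwj : w ^ (j + k) = (1 - ε) ^ (j + k) * (θ * w) ^ (j + k) := by
      rw [mul_pow, ← mul_assoc, ← mul_pow, mul_inv_cancel₀ (ne_of_gt h1ε),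
        one_pow, one_mul]
    have h2 : (1 - ε) ^ (j + k) ≤ (1 - ε) ^ k :=
      pow_le_pow_of_le_one (le_of_lt h1ε) (by linarith) (Nat.le_add_left k j)
    calc w ^ (j + k) / ((j + k)! : ℝ)
        = (1 - ε) ^ (j + k) * ((θ * w) ^ (j + k) / ((j + k)! : ℝ)) := by rw [hwj]; ring
      _ ≤ (1 - ε) ^ k * ((θ * w) ^ (j + k) / ((j + k)! : ℝ)) :=
          mul_le_mul_of_nonneg_right h2 (by positivity)
  have hsum : (∑' j : ℕ, w ^ (j + k) / ((j + k)! : ℝ))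
      ≤ (1 - ε) ^ k * Real.exp (θ * w) := by
    calc (∑' j : ℕ, w ^ (j + k) / ((j + k)! : ℝ))
        ≤ ∑' j : ℕ, (1 - ε) ^ k * ((θ * w) ^ (j + k) / ((j + k)! : ℝ)) :=
          Summable.tsum_le_tsum hterm (summable_shift k w) ((summable_shift k (θ * w)).mul_left _)
      _ = (1 - ε) ^ k * ∑' j : ℕ, (θ * w) ^ (j + k) / ((j + k)! : ℝ) := tsum_mul_left
      _ ≤ (1 - ε) ^ k * Real.exp (θ * w) :=
          mul_le_mul_of_nonneg_left (tsum_shift_le_exp (by positivity) k) (by positivity)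
  have hexpmul : Real.exp (-w) * Real.exp (θ * w) = Real.exp ((θ - 1) * w) := by
    rw [← Real.exp_add]; congr 1; ring
  have harg : (θ - 1) * w ≤ ε * k := by
    have h7 : (θ - 1) * (1 - ε) = ε := by rw [hθdef]; field_simp; ring
    calc (θ - 1) * w ≤ (θ - 1) * ((1 - ε) * k) :=
          mul_le_mul_of_nonneg_left hw (by linarith)
      _ = ε * k := by rw [← mul_assoc, h7]
  calc Real.exp (-w) * ∑' j : ℕ, w ^ (j + k) / ((j + k)! : ℝ)
      ≤ Real.exp (-w) * ((1 - ε) ^ k * Real.exp (θ * w)) :=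
        mul_le_mul_of_nonneg_left hsum (le_of_lt (Real.exp_pos _))
    _ = (1 - ε) ^ k * Real.exp ((θ - 1) * w) := by rw [← hexpmul]; ring
    _ ≤ (1 - ε) ^ k * Real.exp (ε * k) :=
        mul_le_mul_of_nonneg_left (Real.exp_le_exp.2 harg) (by positivity)
    _ = ((1 - ε) * Real.exp ε) ^ k := by
        rw [show ε * (k:ℝ) = (k:ℝ) * ε by ring, Real.exp_nat_mul, mul_pow]



lemma exists_pow_two_bound {y : ℝ} (hy : 1 ≤ y) :
    ∃ n : ℕ, (2:ℝ) ^ n ≤ y ∧ y < 2 ^ (n + 1) := by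
  set m := ⌊y⌋₊ with hm
  have hy0 : (0:ℝ) ≤ y := by linarith
  have hm1 : 1 ≤ m := Nat.le_floor (by exact_mod_cast hy)
  refine ⟨Nat.log 2 m, ?_, ?_⟩
  · have ha : (2:ℝ) ^ Nat.log 2 m ≤ (m : ℝ) := by
      exact_mod_cast Nat.pow_log_le_self 2 (by omega)
    have hb : (m : ℝ) ≤ y := Nat.floor_le hy0
    linarith
  · have h1 : m < 2 ^ (Nat.log 2 m + 1) := Nat.lt_pow_succ_log_self (by norm_num) m
    have h2 : (m:ℝ) + 1 ≤ (2:ℝ) ^ (Nat.log 2 m + 1) := by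
      exact_mod_cast Nat.succ_le_of_lt h1
    have h3 : y < (m:ℝ) + 1 := Nat.lt_floor_add_one y
    linarith

lemma sv_lower_bound (L G : ℝ → ℝ) (τ : ℝ) (hτ : 1 < τ)
    (hLpos : ∀ x, 0 < x → 0 < L x)
    (hG : ∀ x y, x ≤ y → G y ≤ G x)
    (hGL : ∀ t, 0 < t → G t = L t * t ^ (-(τ - 1)))
    (h2 : ∀ᶠ x in atTop, 1 / 2 ≤ L (2 * x) / L x) :
    ∃ C, 0 < C ∧ ∃ x0 : ℝ, 1 ≤ x0 ∧ ∀ x, x0 ≤ x → C / x ≤ L x := by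
  obtain ⟨x1, hx1⟩ := eventually_atTop.1 h2
  set x0 : ℝ := max x1 1 with hx0def
  have hx01 : (1:ℝ) ≤ x0 := le_max_right _ _
  have hx0pos : (0:ℝ) < x0 := lt_of_lt_of_le one_pos hx01
  have hLx0 : 0 < L x0 := hLpos x0 hx0pos
  have key : ∀ x, x0 ≤ x → L x / 2 ≤ L (2 * x) := by
    intro x hx
    have hLx : 0 < L x := hLpos x (lt_of_lt_of_le hx0pos hx)
    have h := hx1 x (le_trans (le_max_left _ _) hx)
    rw [le_div_iff₀ hLx] at h
    linarith
  have pow_bound : ∀ n : ℕ, L x0 / 2 ^ n ≤ L (2 ^ n * x0) := by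
    intro n
    induction n with
    | zero => simp
    | succ n ih =>
      have h1 : (1:ℝ) ≤ 2 ^ n := one_le_pow₀ (by norm_num)
      have hx : x0 ≤ 2 ^ n * x0 := le_mul_of_one_le_left (le_of_lt hx0pos) h1
      have h3 := key _ hx
      have h4 : (2:ℝ) * (2 ^ n * x0) = 2 ^ (n + 1) * x0 := by ring
      rw [h4] at h3
      have h5 : L x0 / 2 ^ (n + 1) = L x0 / 2 ^ n / 2 := by
        rw [pow_succ, ← div_div]
      rw [h5]
      calc L x0 / 2 ^ n / 2 ≤ L (2 ^ n * x0) / 2 := by linarith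
        _ ≤ L (2 ^ (n + 1) * x0) := h3
  set C : ℝ := L x0 * x0 * (1 / 2) ^ (τ - 1) / 2 with hCdef
  have hτ1 : (0:ℝ) ≤ τ - 1 := by linarith
  have hCpos : 0 < C := by
    have := Real.rpow_pos_of_pos (show (0:ℝ) < 1/2 by norm_num) (τ - 1)
    positivity
  refine ⟨C, hCpos, x0, hx01, ?_⟩
  intro x hx
  have hxpos : 0 < x := lt_of_lt_of_le hx0pos hx
  have hy : 1 ≤ x / x0 := (one_le_div hx0pos).2 hx
  obtain ⟨n, hn1, hn2⟩ := exists_pow_two_bound hy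
  have hlow : (2:ℝ) ^ n * x0 ≤ x := (le_div_iff₀ hx0pos).1 hn1
  have hhigh : x < 2 ^ (n + 1) * x0 := by
    have := (div_lt_iff₀ hx0pos).1 hn2
    linarith
  set z : ℝ := 2 ^ (n + 1) * x0 with hzdef
  have hzpos : 0 < z := by positivity
  have hLx_eq : L x = G x * x ^ (τ - 1) := by
    rw [hGL x hxpos, mul_assoc, ← Real.rpow_add hxpos, neg_add_cancel, Real.rpow_zero,
      mul_one]
  have hGz : G z = L z * z ^ (-(τ - 1)) := hGL z hzpos
  have hGxz : G z ≤ G x := hG x z (le_of_lt hhigh)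
  have hLz : L x0 / 2 ^ (n + 1) ≤ L z := pow_bound (n + 1)
  have hzrp : 0 < z ^ (-(τ - 1)) := Real.rpow_pos_of_pos hzpos _
  have hxrp : 0 < x ^ (τ - 1) := Real.rpow_pos_of_pos hxpos _
  have step1 : L x0 / 2 ^ (n + 1) * z ^ (-(τ - 1)) * x ^ (τ - 1) ≤ L x := by
    rw [hLx_eq]
    have h6 : L x0 / 2 ^ (n + 1) * z ^ (-(τ - 1)) ≤ G z := by
      rw [hGz]
      exact mul_le_mul_of_nonneg_right hLz (le_of_lt hzrp)
    exact mul_le_mul_of_nonneg_right (le_trans h6 hGxz) (le_of_lt hxrp)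
  have hratio : z ^ (-(τ - 1)) * x ^ (τ - 1) = (x / z) ^ (τ - 1) := by
    rw [Real.rpow_neg hzpos.le, Real.div_rpow hxpos.le hzpos.le]
    ring
  have hxz : (1:ℝ) / 2 ≤ x / z := by
    rw [le_div_iff₀ hzpos, hzdef]
    have : (2:ℝ) ^ (n+1) = 2 * 2 ^ n := by ring
    rw [this]
    nlinarith [hlow, hx0pos]
  have hrr : ((1:ℝ) / 2) ^ (τ - 1) ≤ (x / z) ^ (τ - 1) :=
    Real.rpow_le_rpow (by norm_num) hxz hτ1
  have hstep2 : L x0 / 2 ^ (n + 1) * (1 / 2) ^ (τ - 1) ≤ L x := by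
    calc L x0 / 2 ^ (n + 1) * (1 / 2) ^ (τ - 1)
        ≤ L x0 / 2 ^ (n + 1) * (x / z) ^ (τ - 1) := by
          apply mul_le_mul_of_nonneg_left hrr (by positivity)
      _ = L x0 / 2 ^ (n + 1) * (z ^ (-(τ - 1)) * x ^ (τ - 1)) := by rw [hratio]
      _ = L x0 / 2 ^ (n + 1) * z ^ (-(τ - 1)) * x ^ (τ - 1) := by ring
      _ ≤ L x := step1
  have hfinal : C / x ≤ L x0 / 2 ^ (n + 1) * (1 / 2) ^ (τ - 1) := by
    rw [hCdef, div_le_iff₀ hxpos]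
    have h8 : x0 * 2 ^ n ≤ x := by nlinarith [hlow]
    have h9 : (0:ℝ) < (1/2:ℝ) ^ (τ - 1) := Real.rpow_pos_of_pos (by norm_num) _
    have h10 : L x0 * x0 * (1 / 2) ^ (τ - 1) / 2 ≤ L x0 / 2 ^ (n + 1) * (1 / 2) ^ (τ - 1) * (x0 * 2 ^ n) := by
      have : L x0 / 2 ^ (n + 1) * (1 / 2) ^ (τ - 1) * (x0 * 2 ^ n)
          = L x0 * x0 * (1 / 2) ^ (τ - 1) / 2 := by
        field_simp
        ring
      rw [this]
    calc L x0 * x0 * (1 / 2) ^ (τ - 1) / 2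
        ≤ L x0 / 2 ^ (n + 1) * (1 / 2) ^ (τ - 1) * (x0 * 2 ^ n) := h10
      _ ≤ L x0 / 2 ^ (n + 1) * (1 / 2) ^ (τ - 1) * x := by
          apply mul_le_mul_of_nonneg_left h8 (by positivity)
  linarith

end MixedPoissonAux

open MixedPoissonAux

/-- A mixed Poisson random variable inherits the power-law tail of its mixing variable:
if `P(W ≥ t) = L(t) t^{-(τ-1)}` with `L` slowly varying and `τ > 2`, and
`P(N = k) = E[e^{-W} W^k / k!]`, then `P(N ≥ k)/P(W ≥ k) → 1` as `k → ∞`. -/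
theorem mixed_poisson_power_law_tail
    {Ω : Type*} [MeasurableSpace Ω] (μ : Measure Ω) [IsProbabilityMeasure μ]
    (W : Ω → ℝ) (hWm : Measurable W) (hW0 : ∀ ω, 0 ≤ W ω) (hint : Integrable W μ)
    (L : ℝ → ℝ) (hLpos : ∀ x, 0 < x → 0 < L x)
    (hLslow : ∀ c : ℝ, 0 < c →
      Tendsto (fun x : ℝ => L (c * x) / L x) atTop (nhds 1))
    (τ : ℝ) (hτ : 2 < τ)
    (htail : ∀ t : ℝ, 0 < t → (μ {ω | t ≤ W ω}).toReal = L t * t ^ (-(τ - 1))) :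
    Tendsto (fun k : ℕ =>
        (∑' j : ℕ, ∫ ω, Real.exp (-W ω) * W ω ^ (k + j) / (Nat.factorial (k + j)) ∂μ) /
          (μ {ω | (k : ℝ) ≤ W ω}).toReal)
      atTop (nhds 1) := by
  classical
  set G : ℝ → ℝ := fun t => (μ {ω | t ≤ W ω}).toReal with hGdef
  have hGanti : ∀ x y : ℝ, x ≤ y → G y ≤ G x := by
    intro x y hxy
    exact ENNReal.toReal_mono (measure_ne_top μ _)
      (measure_mono fun ω hω => le_trans hxy hω)
  have hGle1 : ∀ s : Set Ω, (μ s).toReal ≤ 1 := by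
    intro s
    have h := measure_mono (μ := μ) (Set.subset_univ s)
    rw [measure_univ] at h
    calc (μ s).toReal ≤ (1 : ℝ≥0∞).toReal := ENNReal.toReal_mono (by norm_num) h
      _ = 1 := by norm_num
  have hGpos : ∀ t : ℝ, 0 < t → 0 < G t := by
    intro t ht
    have h : G t = L t * t ^ (-(τ - 1)) := htail t ht
    rw [h]
    exact mul_pos (hLpos t ht) (Real.rpow_pos_of_pos ht _)
  have hsetm : ∀ t : ℝ, MeasurableSet {ω | t ≤ W ω} := fun t => hWm measurableSet_Ici
  -- measurability of pf ∘ W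
  have hpfm : ∀ k : ℕ, Measurable fun ω => pf k (W ω) := by
    intro k
    apply Measurable.mul
    · exact Real.measurable_exp.comp hWm.neg
    · apply Finset.measurable_sum
      intro j _
      exact (hWm.pow_const j).div_const _
  have hpfW_int : ∀ k : ℕ, Integrable (fun ω => pf k (W ω)) μ := by
    intro k
    apply MeasureTheory.Integrable.mono' (integrable_const (1:ℝ))
      (hpfm k).aestronglyMeasurable
    filter_upwards with ω
    rw [Real.norm_eq_abs, abs_of_nonneg (pf_nonneg k (hW0 ω))]
    exact pf_le_one k (hW0 ω)
  have hI_int : ∀ k : ℕ, Integrable (fun ω => 1 - pf k (W ω)) μ := fun k =>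
    (integrable_const 1).sub (hpfW_int k)
  -- the numerator identity
  have hnn : ∀ (k : ℕ) (ω : Ω) (j : ℕ),
      0 ≤ Real.exp (-W ω) * W ω ^ (k + j) / ((k + j)! : ℝ) := by
    intro k ω j
    have := hW0 ω
    positivity
  have hnum : ∀ k : ℕ,
      (∑' j : ℕ, ∫ ω, Real.exp (-W ω) * W ω ^ (k + j) / ((k + j)! : ℝ) ∂μ)
        = ∫ ω, (1 - pf k (W ω)) ∂μ := by
    intro k
    have hmeasj : ∀ j : ℕ, AEStronglyMeasurable
        (fun ω => Real.exp (-W ω) * W ω ^ (k + j) / ((k + j)! : ℝ)) μ := by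
      intro j
      exact (((Real.measurable_exp.comp hWm.neg).mul (hWm.pow_const _)).div_const
        _).aestronglyMeasurable
    have hfin : (∑' j : ℕ,
        ∫⁻ ω, ‖Real.exp (-W ω) * W ω ^ (k + j) / ((k + j)! : ℝ)‖₊ ∂μ) ≠ ⊤ := by
      change (∑' j : ℕ, ∫⁻ ω, ‖Real.exp (-W ω) * W ω ^ (k + j) / ((k + j)! : ℝ)‖ₑ ∂μ) ≠ ⊤
      rw [← MeasureTheory.lintegral_tsum (fun j => (hmeasj j).enorm)]
      have hle : (∫⁻ ω, ∑' j : ℕ,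
          (‖Real.exp (-W ω) * W ω ^ (k + j) / ((k + j)! : ℝ)‖₊ : ℝ≥0∞) ∂μ) ≤ 1 := by
        calc (∫⁻ ω, ∑' j : ℕ,
            (‖Real.exp (-W ω) * W ω ^ (k + j) / ((k + j)! : ℝ)‖₊ : ℝ≥0∞) ∂μ)
            ≤ ∫⁻ _, 1 ∂μ := by
              apply lintegral_mono
              intro ω
              calc (∑' j : ℕ,
                  (‖Real.exp (-W ω) * W ω ^ (k + j) / ((k + j)! : ℝ)‖₊ : ℝ≥0∞))
                  = ∑' j : ℕ, ENNReal.ofReal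
                      (Real.exp (-W ω) * W ω ^ (k + j) / ((k + j)! : ℝ)) :=
                    tsum_congr fun j => Real.enorm_eq_ofReal (hnn k ω j)
                _ = ENNReal.ofReal
                      (∑' j : ℕ, Real.exp (-W ω) * W ω ^ (k + j) / ((k + j)! : ℝ)) :=
                    (ENNReal.ofReal_tsum_of_nonneg (hnn k ω) (summable_aux k (W ω))).symm
                _ ≤ 1 := by
                    rw [t_eq k (W ω)]
                    have h1 : (1:ℝ) - pf k (W ω) ≤ 1 := by
                      linarith [pf_nonneg k (hW0 ω)]
                    calc ENNReal.ofReal (1 - pf k (W ω)) ≤ ENNReal.ofReal 1 :=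
                        ENNReal.ofReal_le_ofReal h1
                      _ = 1 := ENNReal.ofReal_one
          _ = 1 := by rw [lintegral_one, measure_univ]
      exact ne_top_of_le_ne_top ENNReal.one_ne_top hle
    rw [← MeasureTheory.integral_tsum hmeasj hfin]
    exact integral_congr_ae (Eventually.of_forall fun ω => t_eq k (W ω))
  -- upper bound on the integral
  have hIub : ∀ ε : ℝ, 0 < ε → ε < 1 → ∀ k : ℕ,
      (∫ ω, (1 - pf k (W ω)) ∂μ)
        ≤ G ((1 - ε) * k) + ((1 - ε) * Real.exp ε) ^ k := by
    intro ε hε hε1 k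
    set A := {ω | (1 - ε) * (k:ℝ) ≤ W ω} with hAdef
    have hA : MeasurableSet A := hsetm _
    rw [← integral_add_compl hA (hI_int k)]
    have h1 : (∫ ω in A, (1 - pf k (W ω)) ∂μ) ≤ G ((1 - ε) * k) := by
      calc (∫ ω in A, (1 - pf k (W ω)) ∂μ) ≤ ∫ _ in A, (1:ℝ) ∂μ := by
            apply setIntegral_mono_on (hI_int k).integrableOn
              integrableOn_const hA
            intro ω _
            linarith [pf_nonneg k (hW0 ω)]
        _ = (μ A).toReal := by rw [setIntegral_const, smul_eq_mul, mul_one]; rfl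
        _ = G ((1 - ε) * k) := rfl
    have hsk : (0:ℝ) ≤ ((1 - ε) * Real.exp ε) ^ k :=
      pow_nonneg (mul_nonneg (by linarith) (Real.exp_nonneg _)) k
    have h2 : (∫ ω in Aᶜ, (1 - pf k (W ω)) ∂μ) ≤ ((1 - ε) * Real.exp ε) ^ k := by
      calc (∫ ω in Aᶜ, (1 - pf k (W ω)) ∂μ)
          ≤ ∫ _ in Aᶜ, ((1 - ε) * Real.exp ε) ^ k ∂μ := by
            apply setIntegral_mono_on (hI_int k).integrableOn
              integrableOn_const hA.compl
            intro ω hω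
            have hωlt : W ω ≤ (1 - ε) * k := by
              simp only [hAdef, Set.mem_compl_iff, Set.mem_setOf_eq, not_le] at hω
              linarith
            exact tail_le_pow hε hε1 k (hW0 ω) hωlt
        _ = (μ Aᶜ).toReal * ((1 - ε) * Real.exp ε) ^ k := by
            rw [setIntegral_const, smul_eq_mul]; rfl
        _ ≤ 1 * ((1 - ε) * Real.exp ε) ^ k :=
            mul_le_mul_of_nonneg_right (hGle1 _) hsk
        _ = ((1 - ε) * Real.exp ε) ^ k := one_mul _
    linarith
  -- lower bound on the integral
  have hIlb : ∀ ε : ℝ, 0 < ε → ∀ k : ℕ,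
      (1 - ((1 + ε) * Real.exp (-ε)) ^ k) * G ((1 + ε) * k)
        ≤ ∫ ω, (1 - pf k (W ω)) ∂μ := by
    intro ε hε k
    set B := {ω | (1 + ε) * (k:ℝ) ≤ W ω} with hBdef
    have hB : MeasurableSet B := hsetm _
    calc (1 - ((1 + ε) * Real.exp (-ε)) ^ k) * G ((1 + ε) * k)
        = ∫ _ in B, (1 - ((1 + ε) * Real.exp (-ε)) ^ k) ∂μ := by
          rw [setIntegral_const, smul_eq_mul, mul_comm]; rfl
      _ ≤ ∫ ω in B, (1 - pf k (W ω)) ∂μ := by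
          apply setIntegral_mono_on
            integrableOn_const
            (hI_int k).integrableOn hB
          intro ω hω
          have hωk : (1 + ε) * (k:ℝ) ≤ W ω := hω
          have := pf_le_pow hε k hωk
          linarith
      _ ≤ ∫ ω, (1 - pf k (W ω)) ∂μ := by
          apply setIntegral_le_integral (hI_int k)
          filter_upwards with ω
          simp only [Pi.zero_apply]
          linarith [pf_le_one k (hW0 ω)]
  -- lower bound on L from slow variation
  have h2ev : ∀ᶠ x in atTop, 1 / 2 ≤ L (2 * x) / L x :=
    (hLslow 2 two_pos).eventually (eventually_ge_nhds (by norm_num : (1:ℝ)/2 < 1))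
  obtain ⟨C, hC, x0, hx01, hCb⟩ := sv_lower_bound L G τ (by linarith) hLpos hGanti
    (fun t ht => htail t ht) h2ev
  -- tail ratio convergence
  have hGratio : ∀ c : ℝ, 0 < c →
      Tendsto (fun k : ℕ => G (c * k) / G k) atTop (nhds (c ^ (-(τ - 1)))) := by
    intro c hc
    have h1 : Tendsto (fun k : ℕ => L (c * k) / L k * c ^ (-(τ - 1))) atTop
        (nhds (1 * c ^ (-(τ - 1)))) :=
      ((hLslow c hc).comp tendsto_natCast_atTop_atTop).mul_const _
    rw [one_mul] at h1
    refine Tendsto.congr' ?_ h1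
    filter_upwards [eventually_ge_atTop 1] with k hk
    have hkpos : (0:ℝ) < k := by exact_mod_cast Nat.lt_of_lt_of_le Nat.zero_lt_one hk
    have hck : (0:ℝ) < c * k := by positivity
    have e1 : G (c * k) = L (c * k) * (c * (k:ℝ)) ^ (-(τ - 1)) := htail _ hck
    have e2 : G (k:ℝ) = L k * (k:ℝ) ^ (-(τ - 1)) := htail _ hkpos
    rw [e1, e2, Real.mul_rpow hc.le hkpos.le]
    have hLk : L k ≠ 0 := ne_of_gt (hLpos _ hkpos)
    have hkr : (k:ℝ) ^ (-(τ - 1)) ≠ 0 := ne_of_gt (Real.rpow_pos_of_pos hkpos _)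
    field_simp
  -- remainder terms tend to zero
  have hrem : ∀ s : ℝ, 0 ≤ s → s < 1 →
      Tendsto (fun k : ℕ => s ^ k / G k) atTop (nhds 0) := by
    intro s hs0 hs1
    set m := ⌈τ⌉₊ with hmdef
    have hmain : Tendsto (fun k : ℕ => 1 / C * ((k:ℝ) ^ m * s ^ k)) atTop
        (nhds (1 / C * 0)) :=
      (tendsto_pow_const_mul_const_pow_of_lt_one m hs0 hs1).const_mul _
    rw [mul_zero] at hmain
    apply squeeze_zero' ?_ ?_ hmain
    · filter_upwards [eventually_ge_atTop 1] with k hk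
      have hkpos : (0:ℝ) < k := by exact_mod_cast Nat.lt_of_lt_of_le Nat.zero_lt_one hk
      exact div_nonneg (pow_nonneg hs0 k) (le_of_lt (hGpos _ hkpos))
    · filter_upwards [eventually_ge_atTop 1,
        tendsto_natCast_atTop_atTop.eventually_ge_atTop x0] with k hk hkx0
      have hk1 : (1:ℝ) ≤ k := by exact_mod_cast hk
      have hkpos : (0:ℝ) < k := by linarith
      have hL : C / k ≤ L k := hCb _ hkx0
      have hrp : (0:ℝ) < (k:ℝ) ^ (-(τ - 1)) := Real.rpow_pos_of_pos hkpos _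
      have hGk : C * (k:ℝ) ^ (-τ) ≤ G k := by
        have e2 : G (k:ℝ) = L k * (k:ℝ) ^ (-(τ - 1)) := htail _ hkpos
        have h3 : C / k * (k:ℝ) ^ (-(τ - 1)) ≤ L k * (k:ℝ) ^ (-(τ - 1)) :=
          mul_le_mul_of_nonneg_right hL (le_of_lt hrp)
        have h4 : C * (k:ℝ) ^ (-τ) = C / k * (k:ℝ) ^ (-(τ - 1)) := by
          have h5 := Real.rpow_add hkpos (-1) (-(τ - 1))
          rw [Real.rpow_neg_one] at h5
          rw [show -τ = -1 + -(τ - 1) by ring, h5, div_eq_mul_inv]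
          ring
        rw [h4, e2]
        exact h3
      have hCk : (0:ℝ) < C * (k:ℝ) ^ (-τ) :=
        mul_pos hC (Real.rpow_pos_of_pos hkpos _)
      have hd1 : s ^ k / G k ≤ s ^ k / (C * (k:ℝ) ^ (-τ)) :=
        div_le_div_of_nonneg_left (pow_nonneg hs0 k) hCk hGk
      have hd2 : s ^ k / (C * (k:ℝ) ^ (-τ)) = 1 / C * ((k:ℝ) ^ τ * s ^ k) := by
        rw [Real.rpow_neg hkpos.le]
        have hkτ : (k:ℝ) ^ τ ≠ 0 := ne_of_gt (Real.rpow_pos_of_pos hkpos _)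
        field_simp
      have hd3 : (k:ℝ) ^ τ ≤ (k:ℝ) ^ m := by
        have h := Real.rpow_le_rpow_of_exponent_le hk1 (Nat.le_ceil τ)
        rwa [Real.rpow_natCast] at h
      calc s ^ k / G k ≤ 1 / C * ((k:ℝ) ^ τ * s ^ k) := by rw [← hd2]; exact hd1
        _ ≤ 1 / C * ((k:ℝ) ^ m * s ^ k) := by
            apply mul_le_mul_of_nonneg_left
              (mul_le_mul_of_nonneg_right hd3 (pow_nonneg hs0 k)) (by positivity)
  -- rewrite the goal
  have hfun : (fun k : ℕ =>
      (∑' j : ℕ, ∫ ω, Real.exp (-W ω) * W ω ^ (k + j) / (Nat.factorial (k + j)) ∂μ) /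
        (μ {ω | (k : ℝ) ≤ W ω}).toReal)
      = fun k : ℕ => (∫ ω, (1 - pf k (W ω)) ∂μ) / G k := by
    funext k
    rw [hnum k]
  rw [hfun]
  rw [Metric.tendsto_atTop]
  intro η hη
  -- choose ε
  have hrpow1 : Tendsto (fun x : ℝ => x ^ (-(τ - 1))) (nhds 1) (nhds 1) := by
    have h := (Real.continuousAt_rpow_const 1 (-(τ - 1)) (Or.inl one_ne_zero))
    have h2 := h.tendsto
    rwa [Real.one_rpow] at h2
  have hc1 : Tendsto (fun e : ℝ => (1 - e) ^ (-(τ - 1))) (nhds 0) (nhds 1) := by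
    have h1 : Tendsto (fun e : ℝ => 1 - e) (nhds (0:ℝ)) (nhds 1) := by
      have hc : Continuous (fun e : ℝ => 1 - e) := continuous_const.sub continuous_id
      have := hc.tendsto (0:ℝ)
      simpa using this
    exact hrpow1.comp h1
  have hc2 : Tendsto (fun e : ℝ => (1 + e) ^ (-(τ - 1))) (nhds 0) (nhds 1) := by
    have h1 : Tendsto (fun e : ℝ => 1 + e) (nhds (0:ℝ)) (nhds 1) := by
      have hc : Continuous (fun e : ℝ => 1 + e) := continuous_const.add continuous_id
      have := hc.tendsto (0:ℝ)
      simpa using this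
    exact hrpow1.comp h1
  have hev : ∀ᶠ e in nhds (0:ℝ),
      (1 - e) ^ (-(τ - 1)) ≤ 1 + η / 4 ∧ 1 - η / 4 ≤ (1 + e) ^ (-(τ - 1)) :=
    (hc1.eventually (eventually_le_nhds (by linarith))).and
      (hc2.eventually (eventually_ge_nhds (by linarith)))
  obtain ⟨δ, hδ, hball⟩ := Metric.eventually_nhds_iff.1 hev
  set ε := min (δ / 2) (1 / 2) with hεdef
  have hε : 0 < ε := lt_min (by linarith) (by norm_num)
  have hε1 : ε < 1 := lt_of_le_of_lt (min_le_right _ _) (by norm_num)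
  have hεδ : dist ε (0:ℝ) < δ := by
    rw [Real.dist_eq, sub_zero, abs_of_pos hε]
    calc ε ≤ δ / 2 := min_le_left _ _
      _ < δ := by linarith
  obtain ⟨hub, hlb⟩ := hball hεδ
  -- geometric rates
  set r := (1 + ε) * Real.exp (-ε) with hrdef
  set s := (1 - ε) * Real.exp ε with hsdef
  have hr0 : 0 ≤ r := mul_nonneg (by linarith) (Real.exp_nonneg _)
  have hs0 : 0 ≤ s := mul_nonneg (by linarith) (Real.exp_nonneg _)
  have hr1 : r < 1 := by
    have h := Real.add_one_lt_exp (ne_of_gt hε)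
    have h2 : (1 + ε) / Real.exp ε < 1 := (div_lt_one (Real.exp_pos _)).2 (by linarith)
    rwa [div_eq_mul_inv, ← Real.exp_neg] at h2
  have hs1 : s < 1 := by
    have h := Real.add_one_lt_exp (show -ε ≠ 0 from ne_of_lt (by linarith))
    rw [Real.exp_neg] at h
    have h2 : (1 - ε) * Real.exp ε < (Real.exp ε)⁻¹ * Real.exp ε :=
      mul_lt_mul_of_pos_right (by linarith) (Real.exp_pos _)
    rwa [inv_mul_cancel₀ (ne_of_gt (Real.exp_pos _))] at h2
  -- limits of the bounding sequences
  have hUten : Tendsto (fun k : ℕ => G ((1 - ε) * k) / G k + s ^ k / G k) atTop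
      (nhds ((1 - ε) ^ (-(τ - 1)) + 0)) :=
    (hGratio (1 - ε) (by linarith)).add (hrem s hs0 hs1)
  rw [add_zero] at hUten
  have hLten : Tendsto (fun k : ℕ => (1 - r ^ k) * (G ((1 + ε) * k) / G k)) atTop
      (nhds (1 * (1 + ε) ^ (-(τ - 1)))) := by
    have h1 : Tendsto (fun k : ℕ => 1 - r ^ k) atTop (nhds (1 - 0)) :=
      tendsto_const_nhds.sub (tendsto_pow_atTop_nhds_zero_of_lt_one hr0 hr1)
    rw [sub_zero] at h1
    exact h1.mul (hGratio (1 + ε) (by linarith))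
  rw [one_mul] at hLten
  -- eventual bounds
  have hUev : ∀ᶠ k : ℕ in atTop,
      G ((1 - ε) * k) / G k + s ^ k / G k ≤ (1 - ε) ^ (-(τ - 1)) + η / 4 :=
    hUten.eventually (eventually_le_nhds (by linarith))
  have hLev : ∀ᶠ k : ℕ in atTop,
      (1 + ε) ^ (-(τ - 1)) - η / 4 ≤ (1 - r ^ k) * (G ((1 + ε) * k) / G k) :=
    hLten.eventually (eventually_ge_nhds (by linarith))
  have hcomb : ∀ᶠ k : ℕ in atTop,
      dist ((∫ ω, (1 - pf k (W ω)) ∂μ) / G k) 1 < η := by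
    filter_upwards [hUev, hLev, eventually_ge_atTop 1] with k hU hL hk
    have hkpos : (0:ℝ) < k := by exact_mod_cast Nat.lt_of_lt_of_le Nat.zero_lt_one hk
    have hGk : 0 < G (k:ℝ) := hGpos _ hkpos
    have hup : (∫ ω, (1 - pf k (W ω)) ∂μ) / G k
        ≤ G ((1 - ε) * k) / G k + s ^ k / G k := by
      rw [← add_div]
      exact (div_le_div_iff_of_pos_right hGk).2 (hIub ε hε hε1 k)
    have hlo : (1 - r ^ k) * (G ((1 + ε) * k) / G k)
        ≤ (∫ ω, (1 - pf k (W ω)) ∂μ) / G k := by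
      rw [← mul_div_assoc]
      exact (div_le_div_iff_of_pos_right hGk).2 (hIlb ε hε k)
    rw [Real.dist_eq]
    apply abs_lt.2
    constructor
    · linarith
    · linarith
  obtain ⟨N, hN⟩ := eventually_atTop.1 hcomb
  exact ⟨N, hN⟩
end

section
/- Let X ~ Exp(α) and let W = γ·η·X with γ, η, X independent nonnegative random variables. If E[(γηX)^m] < ∞ for all m ∈ ℕ, then the mixed Poisson probabilities p_k = E[e^{−W} W^k/k!] satisfy: for every β > 0, k^β · p_k → 0 as k → ∞. -/
open MeasureTheory ProbabilityTheory Filter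

/-- For `w ≥ 0` and `n : ℕ`, `w^n * exp (-w) ≤ n!`. -/
lemma pow_mul_exp_neg_le_factorial {w : ℝ} (hw : 0 ≤ w) (n : ℕ) :
    w ^ n * Real.exp (-w) ≤ n.factorial := by
  have hn : (0:ℝ) < n.factorial := by positivity
  have h : w ^ n / n.factorial ≤ Real.exp w := Real.pow_div_factorial_le_exp w hw n
  have h2 : w ^ n / n.factorial * Real.exp (-w) ≤ Real.exp w * Real.exp (-w) :=
    mul_le_mul_of_nonneg_right h (Real.exp_pos _).le
  rw [← Real.exp_add, add_neg_cancel, Real.exp_zero] at h2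
  calc w ^ n * Real.exp (-w) = (w ^ n / n.factorial * Real.exp (-w)) * n.factorial := by
        field_simp
    _ ≤ 1 * n.factorial := mul_le_mul_of_nonneg_right h2 hn.le
    _ = n.factorial := one_mul _

/-- If `W = γ η X` with `γ, η, X` independent nonnegative random variables, `X ~ Exp(α)`,
and `E[W^m] < ∞` for all `m`, then the mixed Poisson probabilities
`p_k = E[e^{-W} W^k / k!]` decay super-polynomially: `k^β p_k → 0` for every `β > 0`. -/
theorem mixed_poisson_superpolynomial_decay
    {Ω : Type*} [MeasurableSpace Ω] (μ : Measure Ω) [IsProbabilityMeasure μ]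
    (γ η X : Ω → ℝ) (hγm : Measurable γ) (hηm : Measurable η) (hXm : Measurable X)
    (hγ0 : ∀ ω, 0 ≤ γ ω) (hη0 : ∀ ω, 0 ≤ η ω) (hX0 : ∀ ω, 0 ≤ X ω)
    (hindep : iIndepFun ![γ, η, X] μ)
    (α : ℝ) (hα : 0 < α) (hX : Measure.map X μ = expMeasure α)
    (W : Ω → ℝ) (hW : W = fun ω => γ ω * η ω * X ω)
    (hmom : ∀ m : ℕ, Integrable (fun ω => W ω ^ m) μ) :
    ∀ β : ℝ, 0 < β →
      Tendsto (fun k : ℕ =>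
          (k : ℝ) ^ β * ∫ ω, Real.exp (-W ω) * W ω ^ k / (Nat.factorial k) ∂μ)
        atTop (nhds 0) := by
  intro β hβ
  have hW0 : ∀ ω, 0 ≤ W ω := by
    intro ω; rw [hW]; exact mul_nonneg (mul_nonneg (hγ0 ω) (hη0 ω)) (hX0 ω)
  set m : ℕ := ⌈β⌉₊ + 1 with hm
  have hβm : β < (m : ℕ) := by
    have := Nat.le_ceil β
    push_cast [hm]
    linarith
  clear_value m
  set C : ℝ := ∫ ω, W ω ^ m ∂μ with hC
  have hC0 : 0 ≤ C := integral_nonneg fun ω => pow_nonneg (hW0 ω) m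
  -- integral bound for k ≥ m
  have hbound : ∀ k : ℕ, m ≤ k →
      (∫ ω, Real.exp (-W ω) * W ω ^ k / (Nat.factorial k) ∂μ)
        ≤ C * ((k - m).factorial / k.factorial : ℝ) := by
    intro k hk
    have hkfac : (0:ℝ) < k.factorial := by positivity
    have hle : ∀ ω, Real.exp (-W ω) * W ω ^ k / (Nat.factorial k)
        ≤ W ω ^ m * ((k - m).factorial / k.factorial : ℝ) := by
      intro ω
      have hw := hW0 ω
      have key : W ω ^ (k - m) * Real.exp (-W ω) ≤ (k - m).factorial :=
        pow_mul_exp_neg_le_factorial hw (k - m)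
      have hsplit : W ω ^ k = W ω ^ m * W ω ^ (k - m) := by
        rw [← pow_add]; congr 1; omega
      rw [div_le_iff₀ hkfac] at *
      calc Real.exp (-W ω) * W ω ^ k
          = W ω ^ m * (W ω ^ (k - m) * Real.exp (-W ω)) := by rw [hsplit]; ring
        _ ≤ W ω ^ m * (k - m).factorial :=
            mul_le_mul_of_nonneg_left key (pow_nonneg hw m)
        _ = W ω ^ m * ((k - m).factorial / k.factorial : ℝ) * k.factorial := by
            field_simp
    have hint : Integrable (fun ω => W ω ^ m * ((k - m).factorial / k.factorial : ℝ)) μ :=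
      (hmom m).mul_const _
    calc (∫ ω, Real.exp (-W ω) * W ω ^ k / (Nat.factorial k) ∂μ)
        ≤ ∫ ω, W ω ^ m * ((k - m).factorial / k.factorial : ℝ) ∂μ := by
          refine integral_mono_of_nonneg (Filter.Eventually.of_forall fun ω => ?_) hint
            (Filter.Eventually.of_forall hle)
          exact div_nonneg (mul_nonneg (Real.exp_pos _).le (pow_nonneg (hW0 ω) k))
            (Nat.cast_nonneg _)
      _ = C * ((k - m).factorial / k.factorial : ℝ) := by
          rw [integral_mul_const]
  -- factorial ratio bound for k ≥ 2m
  have hfac : ∀ k : ℕ, 2 * m ≤ k →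
      ((k - m).factorial / k.factorial : ℝ) ≤ 2 ^ m / (k : ℝ) ^ m := by
    intro k hk
    have hmk : m ≤ k := le_trans (Nat.le_mul_of_pos_left m (by norm_num)) hk
    have h1 : (k - m).factorial * k.descFactorial m = k.factorial :=
      Nat.factorial_mul_descFactorial hmk
    have h2 : (k + 1 - m) ^ m ≤ k.descFactorial m := Nat.pow_sub_le_descFactorial k m
    have h3 : (k : ℝ) ≤ 2 * ((k + 1 - m : ℕ) : ℝ) := by
      have : ((k + 1 - m : ℕ) : ℝ) = (k : ℝ) + 1 - m := by
        push_cast [Nat.cast_sub (by omega : m ≤ k + 1)]; ring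
      rw [this]
      have : (m : ℝ) ≤ k / 2 := by
        have h2m : ((2 * m : ℕ) : ℝ) ≤ ((k : ℕ) : ℝ) := Nat.cast_le.mpr hk
        push_cast at h2m
        linarith
      linarith
    have hdesc : ((k : ℝ) / 2) ^ m ≤ (k.descFactorial m : ℝ) := by
      calc ((k : ℝ) / 2) ^ m ≤ (((k + 1 - m : ℕ) : ℝ)) ^ m := by
            apply pow_le_pow_left₀ (by positivity)
            linarith
        _ = (((k + 1 - m) ^ m : ℕ) : ℝ) := by push_cast; ring
        _ ≤ (k.descFactorial m : ℝ) := Nat.cast_le.mpr h2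
    have hk0 : (0:ℝ) < k := by
      have : 0 < k := by omega
      exact_mod_cast this
    have hkm0 : (0:ℝ) < (k - m).factorial := by positivity
    have hdesc0 : (0:ℝ) < (k.descFactorial m : ℝ) := lt_of_lt_of_le (by positivity) hdesc
    have hfk : (k.factorial : ℝ) = ((k - m).factorial : ℝ) * (k.descFactorial m : ℝ) := by
      exact_mod_cast h1.symm
    rw [hfk, div_le_div_iff₀ (by positivity) (by positivity)]
    calc ((k - m).factorial : ℝ) * (k : ℝ) ^ m
        = (((k : ℝ) / 2) ^ m * 2 ^ m) * ((k - m).factorial : ℝ) := by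
          rw [← mul_pow]; ring_nf
      _ ≤ ((k.descFactorial m : ℝ) * 2 ^ m) * ((k - m).factorial : ℝ) := by
          apply mul_le_mul_of_nonneg_right _ (le_of_lt hkm0)
          exact mul_le_mul_of_nonneg_right hdesc (by positivity)
      _ = 2 ^ m * (((k - m).factorial : ℝ) * (k.descFactorial m : ℝ)) := by ring
  -- squeeze
  have hupper : Tendsto (fun k : ℕ => C * 2 ^ m * (k : ℝ) ^ (β - (m : ℝ))) atTop (nhds 0) := by
    have h1 : Tendsto (fun x : ℝ => x ^ (-((m : ℝ) - β))) atTop (nhds 0) :=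
      tendsto_rpow_neg_atTop (by linarith)
    have h2 : Tendsto (fun k : ℕ => (k : ℝ) ^ (β - (m : ℝ))) atTop (nhds 0) := by
      have := h1.comp tendsto_natCast_atTop_atTop (α := ℕ)
      simpa [Function.comp_def, neg_sub] using this
    simpa using h2.const_mul (C * 2 ^ m)
  refine tendsto_of_tendsto_of_tendsto_of_le_of_le' tendsto_const_nhds hupper ?_ ?_
  · filter_upwards [eventually_ge_atTop 1] with k hk
    have : 0 ≤ ∫ ω, Real.exp (-W ω) * W ω ^ k / (Nat.factorial k) ∂μ :=
      integral_nonneg fun ω => div_nonneg (mul_nonneg (Real.exp_pos _).le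
        (pow_nonneg (hW0 ω) k)) (Nat.cast_nonneg _)
    have hk0 : (0:ℝ) ≤ (k:ℝ) ^ β := Real.rpow_nonneg (Nat.cast_nonneg k) β
    exact mul_nonneg hk0 this
  · filter_upwards [eventually_ge_atTop (2 * m)] with k hk
    have hmk : m ≤ k := le_trans (Nat.le_mul_of_pos_left m (by norm_num)) hk
    have hk0 : (0:ℝ) < k := by
      have : 0 < k := by omega
      exact_mod_cast this
    have hkβ : (0:ℝ) ≤ (k:ℝ) ^ β := Real.rpow_nonneg (le_of_lt hk0) β
    calc (k : ℝ) ^ β * ∫ ω, Real.exp (-W ω) * W ω ^ k / (Nat.factorial k) ∂μ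
        ≤ (k : ℝ) ^ β * (C * ((k - m).factorial / k.factorial : ℝ)) :=
          mul_le_mul_of_nonneg_left (hbound k hmk) hkβ
      _ ≤ (k : ℝ) ^ β * (C * (2 ^ m / (k : ℝ) ^ m)) := by
          apply mul_le_mul_of_nonneg_left _ hkβ
          exact mul_le_mul_of_nonneg_left (hfac k hk) hC0
      _ = C * 2 ^ m * ((k : ℝ) ^ β * ((k : ℝ) ^ m)⁻¹) := by ring
      _ = C * 2 ^ m * (k : ℝ) ^ (β - (m : ℝ)) := by
          rw [← Real.rpow_natCast (k : ℝ) m, ← Real.rpow_neg (le_of_lt hk0),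
            ← Real.rpow_add hk0]
          ring_nf
end
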